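/- arXiv:2505.24084 — 3 statements merged into one kernel-verified Lean document; each statement's English description precedes it below -/
import Mathlib

section
/- Let E be a real Banach space and let I be a closed ideal of C_ph(B_{E*}). Then there exists a weak*-closed positively homogeneous subset K of B_{E*} such that I = { f ∈ C_ph(B_{E*}) : f(x*) = 0 for all x* ∈ K }, and moreover for every f ∈ C_ph(B_{E*}) the distance from f to I equals sup_{x* ∈ K} |f(x*)| (equivalently, the map f + I ↦ f|_K is a surjective lattice isometry from C_ph(B_{E*})/I onto C_ph(K)). -/
noncomputable section

variable (E : Type*) [NormedAddCommGroup E] [NormedSpace ℝ E]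

/-- The closed unit ball of the dual of `E`, as a subset of the weak*-dual;
its subtype topology is the weak* topology. -/
def BallD : Set (WeakDual ℝ E) :=
  {φ : WeakDual ℝ E | ‖WeakDual.toStrongDual φ‖ ≤ 1}

instance : CompactSpace (BallD E) := by
  apply isCompact_iff_compactSpace.mp
  have h := WeakDual.isCompact_closedBall (𝕜 := ℝ) (E := E) 0 1
  convert h using 1
  ext φ
  simp [BallD, Metric.mem_closedBall, dist_zero_right]

/-- The space `C_ph(B_{E*})` of weak*-continuous positively homogeneous real functions
on the dual unit ball, as a subset of `C(B_{E*}, ℝ)` (which carries the supremum norm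
and the pointwise order). -/
def Cph : Set C(BallD E, ℝ) :=
  {f | ∀ (φ : BallD E) (c : ℝ), 0 ≤ c →
    ∀ h : c • (φ : WeakDual ℝ E) ∈ BallD E, f ⟨c • (φ : WeakDual ℝ E), h⟩ = c * f φ}

/-! Everything is read off the common zero set `Z` of `I`. Given `f` with `|f| < r` on `Z`, the
compact set `L = {|f| ≥ r}` misses `Z`, so finitely many `|g|`, `g ∈ I`, add up to some `G ∈ I`
positive on `L`; rescaled, `G ≥ |f|` on `L`. The truncation of `f` to `[-G, G]` lies in `I` by
solidity and is within `r` of `f`. Hence `dist(f, I) ≤ sup_Z |f|`, the other inequality being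
clear, and since `I` is closed it consists of the functions vanishing on `Z`. Positive
homogeneity of `Z` is inherited from the functions of `I`. -/

open Metric Set

section ZeroSet

variable {X : Type*} [TopologicalSpace X]

def zeroSet (I : Set C(X, ℝ)) : Set X := {x | ∀ g ∈ I, g x = 0}

def IsSolidIn (A I : Set C(X, ℝ)) : Prop :=
  ∀ f ∈ A, ∀ g ∈ I, (∀ x, |f x| ≤ |g x|) → f ∈ I

theorem isClosed_zeroSet (I : Set C(X, ℝ)) : IsClosed (zeroSet I) := by
  simp only [zeroSet, ofPred_forall]
  exact isClosed_biInter fun g _ => isClosed_eq g.continuous continuous_const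

theorem inf_mem_of_supClosed {A : Submodule ℝ C(X, ℝ)}
    (hA : SupClosed (A : Set C(X, ℝ))) {f g : C(X, ℝ)} (hf : f ∈ A) (hg : g ∈ A) :
    f ⊓ g ∈ A := by
  simpa [neg_sup] using A.neg_mem (hA (A.neg_mem hf) (A.neg_mem hg))

theorem abs_mem_of_solid {A I : Submodule ℝ C(X, ℝ)}
    (hA : SupClosed (A : Set C(X, ℝ))) (hIA : I ≤ A) (hI : IsSolidIn (A : Set C(X, ℝ)) I)
    {g : C(X, ℝ)} (hg : g ∈ I) :
    |g| ∈ I :=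
  hI _ (hA (hIA hg) (A.neg_mem (hIA hg))) g hg fun x => by simp

theorem exists_nonneg_mem_pos_on {A I : Submodule ℝ C(X, ℝ)}
    (hA : SupClosed (A : Set C(X, ℝ))) (hIA : I ≤ A) (hI : IsSolidIn (A : Set C(X, ℝ)) I)
    {L : Set X} (hL : IsCompact L) (hLZ : Disjoint L (zeroSet I)) :
    ∃ G ∈ I, (∀ x, 0 ≤ G x) ∧ ∀ x ∈ L, 0 < G x := by
  refine hL.induction_on (p := fun S => ∃ G ∈ I, (∀ x, 0 ≤ G x) ∧ ∀ x ∈ S, 0 < G x)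
    ⟨0, I.zero_mem, fun _ => le_rfl, by simp⟩ ?mono ?union ?nhds
  case mono =>
    exact fun S T hST ⟨G, hG, hG0, hGT⟩ => ⟨G, hG, hG0, fun x hx => hGT x (hST hx)⟩
  case union =>
    rintro S T ⟨G, hG, hG0, hGS⟩ ⟨H, hH, hH0, hHT⟩
    refine ⟨G + H, I.add_mem hG hH, fun x => add_nonneg (hG0 x) (hH0 x), ?_⟩
    rintro x (hx | hx)
    · exact add_pos_of_pos_of_nonneg (hGS x hx) (hH0 x)
    · exact add_pos_of_nonneg_of_pos (hG0 x) (hHT x hx)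
  case nhds =>
    intro x hxL
    obtain ⟨g, hg, hgx⟩ : ∃ g ∈ I, g x ≠ 0 := by
      simpa [zeroSet] using disjoint_left.mp hLZ hxL
    refine ⟨{y | g y ≠ 0}, mem_nhdsWithin_of_mem_nhds
      ((isOpen_ne_fun g.continuous continuous_const).mem_nhds hgx), |g|,
      abs_mem_of_solid hA hIA hI hg, fun y => by simp, fun y hy => by simpa using hy⟩

theorem exists_nonneg_mem_abs_le_on {A I : Submodule ℝ C(X, ℝ)}
    (hA : SupClosed (A : Set C(X, ℝ))) (hIA : I ≤ A) (hI : IsSolidIn (A : Set C(X, ℝ)) I)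
    {L : Set X} (hL : IsCompact L) (hLZ : Disjoint L (zeroSet I)) (f : C(X, ℝ)) :
    ∃ G ∈ I, (∀ x, 0 ≤ G x) ∧ ∀ x ∈ L, |f x| ≤ G x := by
  obtain ⟨G, hG, hG0, hGL⟩ := exists_nonneg_mem_pos_on hA hIA hI hL hLZ
  obtain ⟨C, hC⟩ := hL.exists_bound_of_continuousOn (f := fun x => f x / G x)
    (f.continuous.continuousOn.div G.continuous.continuousOn fun x hx => (hGL x hx).ne')
  refine ⟨|C| • G, I.smul_mem _ hG, fun x => mul_nonneg (abs_nonneg C) (hG0 x),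
    fun x hx => ?_⟩
  have hfG : |f x| / G x ≤ C := by simpa [abs_div, abs_of_pos (hGL x hx)] using hC x hx
  calc |f x| ≤ C * G x := (div_le_iff₀ (hGL x hx)).mp hfG
    _ ≤ |C| * G x := mul_le_mul_of_nonneg_right (le_abs_self C) (hG0 x)

theorem abs_sub_max_min_le {a b : ℝ} (hb : 0 ≤ b) :
    |a - max (min a b) (-b)| ≤ max (|a| - b) 0 := by
  rcases le_total a b with hab | hab <;> rcases le_total a (-b) with hab' | hab' <;>
    simp [abs_le, *] <;> grind

theorem exists_mem_dist_le [CompactSpace X] {A I : Submodule ℝ C(X, ℝ)}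
    (hA : SupClosed (A : Set C(X, ℝ))) (hIA : I ≤ A) (hI : IsSolidIn (A : Set C(X, ℝ)) I)
    {f : C(X, ℝ)} (hf : f ∈ A) {r : ℝ} (hr : 0 < r) (hfr : ∀ x ∈ zeroSet I, |f x| < r) :
    ∃ h ∈ I, dist f h ≤ r := by
  set L := {x | r ≤ |f x|}
  have hL : IsCompact L := (isClosed_le continuous_const f.continuous.abs).isCompact
  have hLZ : Disjoint L (zeroSet I) := disjoint_left.mpr fun x hxL hxZ => (hfr x hxZ).not_ge hxL
  obtain ⟨G, hG, hG0, hfG⟩ := exists_nonneg_mem_abs_le_on hA hIA hI hL hLZ f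
  set h := f ⊓ G ⊔ -G
  have hhG : ∀ x, |h x| ≤ G x := fun x => by
    simp only [h, ContinuousMap.sup_apply, ContinuousMap.inf_apply, ContinuousMap.neg_apply, abs_le]
    exact ⟨le_max_right _ _, max_le (min_le_right _ _) (by linarith [hG0 x])⟩
  have hhA : h ∈ A := hA (inf_mem_of_supClosed hA hf (hIA hG)) (A.neg_mem (hIA hG))
  refine ⟨h, hI h hhA G hG fun x => (hhG x).trans (le_abs_self _),
    (ContinuousMap.dist_le hr.le).mpr fun x => ?_⟩
  rw [Real.dist_eq]
  refine (abs_sub_max_min_le (hG0 x)).trans (max_le ?_ hr.le)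
  by_cases hxL : x ∈ L
  · linarith [hfG x hxL]
  · linarith [hG0 x, not_le.mp (show ¬r ≤ |f x| from hxL)]

theorem infDist_eq_sSup_abs_zeroSet [CompactSpace X] {A I : Submodule ℝ C(X, ℝ)}
    (hA : SupClosed (A : Set C(X, ℝ))) (hIA : I ≤ A) (hI : IsSolidIn (A : Set C(X, ℝ)) I)
    (hZ : (zeroSet (I : Set C(X, ℝ))).Nonempty) {f : C(X, ℝ)} (hf : f ∈ A) :
    infDist f I = sSup ((fun x => |f x|) '' zeroSet I) := by
  have hbdd : BddAbove ((fun x => |f x|) '' zeroSet I) :=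
    ⟨‖f‖, forall_mem_image.mpr fun x _ => by simpa using f.norm_coe_le_norm x⟩
  refine le_antisymm (le_of_forall_gt_imp_ge_of_dense fun r hr => ?_) ?_
  · obtain ⟨x₀, hx₀⟩ := hZ
    have hr0 : 0 < r := (abs_nonneg _).trans_lt ((le_csSup hbdd ⟨x₀, hx₀, rfl⟩).trans_lt hr)
    obtain ⟨h, hh, hfh⟩ := exists_mem_dist_le hA hIA hI hf hr0 fun x hx =>
      (le_csSup hbdd ⟨x, hx, rfl⟩).trans_lt hr
    exact (infDist_le_dist_of_mem hh).trans hfh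
  · refine csSup_le (hZ.image _) (forall_mem_image.mpr fun x hx => ?_)
    refine (le_infDist ⟨0, I.zero_mem⟩).mpr fun h hh => ?_
    calc |f x| = dist (f x) (h x) := by rw [Real.dist_eq, hx h hh, sub_zero]
      _ ≤ dist f h := ContinuousMap.dist_apply_le_dist x

theorem eq_setOf_forall_zeroSet [CompactSpace X] {A I : Submodule ℝ C(X, ℝ)}
    (hA : SupClosed (A : Set C(X, ℝ))) (hIA : I ≤ A) (hI : IsSolidIn (A : Set C(X, ℝ)) I)
    (hIclosed : ∀ f ∈ A, f ∈ closure (I : Set C(X, ℝ)) → f ∈ I) :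
    (I : Set C(X, ℝ)) = {f | f ∈ A ∧ ∀ x ∈ zeroSet I, f x = 0} := by
  refine Subset.antisymm (fun g hg => ⟨hIA hg, fun x hx => hx g hg⟩) ?_
  rintro f ⟨hf, hfZ⟩
  refine hIclosed f hf (Metric.mem_closure_iff.mpr fun ε hε => ?_)
  obtain ⟨h, hh, hfh⟩ := exists_mem_dist_le hA hIA hI hf (half_pos hε) fun x hx => by
    simpa [hfZ x hx] using half_pos hε
  exact ⟨h, hh, hfh.trans_lt (half_lt_self hε)⟩

end ZeroSet

def cphSubmodule : Submodule ℝ C(BallD E, ℝ) where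
  carrier := Cph E
  add_mem' hf hg φ c hc h := by simp [hf φ c hc h, hg φ c hc h, mul_add]
  zero_mem' φ c hc h := by simp
  smul_mem' a f hf φ c hc h := by simp [hf φ c hc h, mul_left_comm]

variable {E}

@[simp]
theorem mem_cphSubmodule {f : C(BallD E, ℝ)} : f ∈ cphSubmodule E ↔ f ∈ Cph E := Iff.rfl

theorem zero_mem_ballD : (0 : WeakDual ℝ E) ∈ BallD E := by
  simp [BallD]

theorem smul_mem_ballD {φ : WeakDual ℝ E} {c : ℝ} (hc : 0 ≤ c)
    (hc1 : c ≤ 1 / ‖WeakDual.toStrongDual φ‖) : c • φ ∈ BallD E := by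
  change ‖WeakDual.toStrongDual (c • φ)‖ ≤ 1
  rw [map_smul, norm_smul, Real.norm_eq_abs, abs_of_nonneg hc]
  rcases (norm_nonneg (WeakDual.toStrongDual φ)).eq_or_lt with h0 | hpos
  · simp [← h0]
  · exact (le_div_iff₀ hpos).mp (by simpa using hc1)

theorem apply_zero_of_mem_cph {f : C(BallD E, ℝ)} (hf : f ∈ Cph E) :
    f ⟨0, zero_mem_ballD⟩ = 0 := by
  simpa using hf ⟨0, zero_mem_ballD⟩ 0 le_rfl (by simpa using zero_mem_ballD)

theorem sup_mem_cph {f g : C(BallD E, ℝ)} (hf : f ∈ Cph E) (hg : g ∈ Cph E) :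
    f ⊔ g ∈ Cph E := fun φ c hc h => by
  simp [hf φ c hc h, hg φ c hc h, mul_max_of_nonneg _ _ hc]

theorem zero_mem_zeroSet {I : Set C(BallD E, ℝ)} (hI : I ⊆ Cph E) :
    ⟨0, zero_mem_ballD⟩ ∈ zeroSet I :=
  fun _ hg => apply_zero_of_mem_cph (hI hg)

theorem smul_mem_zeroSet {I : Set C(BallD E, ℝ)} (hI : I ⊆ Cph E) {φ : BallD E}
    (hφ : φ ∈ zeroSet I) {c : ℝ} (hc : 0 ≤ c) (h : c • (φ : WeakDual ℝ E) ∈ BallD E) :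
    ⟨c • (φ : WeakDual ℝ E), h⟩ ∈ zeroSet I := fun g hg => by
  rw [hI hg φ c hc h, hφ g hg, mul_zero]

theorem closed_ideal_of_Cph_is_zero_set_general
    (I : Set C(BallD E, ℝ))
    (hIsub : I ⊆ Cph E)
    (hIzero : (0 : C(BallD E, ℝ)) ∈ I)
    (hIadd : ∀ f ∈ I, ∀ g ∈ I, f + g ∈ I)
    (hIsmul : ∀ (c : ℝ), ∀ f ∈ I, c • f ∈ I)
    (hIsolid : ∀ f ∈ Cph E, ∀ g ∈ I, (∀ φ : BallD E, |f φ| ≤ |g φ|) → f ∈ I)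
    (hIclosed : ∀ f ∈ Cph E, f ∈ closure I → f ∈ I) :
    ∃ K : Set (WeakDual ℝ E),
      K ⊆ BallD E ∧
      IsClosed K ∧
      (0 : WeakDual ℝ E) ∈ K ∧
      (∀ φ ∈ K, φ ≠ 0 → ∀ c : ℝ, 0 < c → c ≤ 1 / ‖WeakDual.toStrongDual φ‖ →
        c • φ ∈ K) ∧
      I = {f | f ∈ Cph E ∧ ∀ φ : BallD E, (φ : WeakDual ℝ E) ∈ K → f φ = 0} ∧
      ∀ f ∈ Cph E,
        Metric.infDist f I = sSup {r : ℝ | ∃ φ : BallD E, (φ : WeakDual ℝ E) ∈ K ∧ r = |f φ|} := by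
  obtain ⟨J, rfl⟩ : ∃ J : Submodule ℝ C(BallD E, ℝ), (J : Set C(BallD E, ℝ)) = I :=
    ⟨{ carrier := I
       add_mem' := fun hf hg => hIadd _ hf _ hg
       zero_mem' := hIzero
       smul_mem' := hIsmul }, rfl⟩
  have hA : SupClosed (cphSubmodule E : Set C(BallD E, ℝ)) := fun _ hf _ hg => sup_mem_cph hf hg
  have hJ : J ≤ cphSubmodule E := hIsub
  set Z := zeroSet (J : Set C(BallD E, ℝ))
  have hK : ∀ φ : BallD E, (φ : WeakDual ℝ E) ∈ Subtype.val '' Z ↔ φ ∈ Z :=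
    fun _ => Subtype.val_injective.mem_set_image
  refine ⟨Subtype.val '' Z, Subtype.coe_image_subset _ _,
    ((isClosed_zeroSet _).isCompact.image continuous_subtype_val).isClosed,
    ⟨_, zero_mem_zeroSet hIsub, rfl⟩, ?_, ?_, fun f hf => ?_⟩
  · rintro _ ⟨φ, hφ, rfl⟩ - c hc hc1
    exact ⟨_, smul_mem_zeroSet hIsub hφ hc.le (smul_mem_ballD hc.le hc1), rfl⟩
  · simpa only [hK, mem_cphSubmodule] using eq_setOf_forall_zeroSet hA hJ hIsolid hIclosed
  · rw [infDist_eq_sSup_abs_zeroSet hA hJ hIsolid ⟨_, zero_mem_zeroSet hIsub⟩ hf]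
    congr 1
    ext r
    simp only [hK, mem_image, mem_ofPred_eq, eq_comm, Z]

/-- **Statement 3.** Every closed ideal `I` of `C_ph(B_{E*})` is the set of functions
vanishing on a weak*-closed positively homogeneous subset `K ⊆ B_{E*}`, and the
quotient `C_ph(B_{E*})/I` is lattice isometric to `C_ph(K)` via `f + I ↦ f|_K`
(equivalently, `dist(f, I) = sup_{x* ∈ K} |f(x*)|` for every `f ∈ C_ph(B_{E*})`). -/
theorem closed_ideal_of_Cph_is_zero_set
    [CompleteSpace E]
    (I : Set C(BallD E, ℝ))
    (hIsub : I ⊆ Cph E)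
    (hIzero : (0 : C(BallD E, ℝ)) ∈ I)
    (hIadd : ∀ f ∈ I, ∀ g ∈ I, f + g ∈ I)
    (hIsmul : ∀ (c : ℝ), ∀ f ∈ I, c • f ∈ I)
    (hIsolid : ∀ f ∈ Cph E, ∀ g ∈ I, (∀ φ : BallD E, |f φ| ≤ |g φ|) → f ∈ I)
    (hIclosed : ∀ f ∈ Cph E, f ∈ closure I → f ∈ I) :
    ∃ K : Set (WeakDual ℝ E),
      K ⊆ BallD E ∧
      IsClosed K ∧
      (0 : WeakDual ℝ E) ∈ K ∧
      (∀ φ ∈ K, φ ≠ 0 → ∀ c : ℝ, 0 < c → c ≤ 1 / ‖WeakDual.toStrongDual φ‖ →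
        c • φ ∈ K) ∧
      I = {f | f ∈ Cph E ∧ ∀ φ : BallD E, (φ : WeakDual ℝ E) ∈ K → f φ = 0} ∧
      ∀ f ∈ Cph E,
        Metric.infDist f I = sSup {r : ℝ | ∃ φ : BallD E, (φ : WeakDual ℝ E) ∈ K ∧ r = |f φ|} :=
  closed_ideal_of_Cph_is_zero_set_general I hIsub hIzero hIadd hIsmul hIsolid hIclosed

end
end

section
/- Let X be a Banach lattice and let x₀ ∈ X be a nonzero positive element. If x₀ is not an atom, then there exists y₀ ∈ X with 0 ≤ y₀ ≤ x₀ such that for every λ > 0 neither λx₀ ≤ y₀ nor λx₀ ≤ x₀ − y₀ holds. -/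
/-!
Let `a` be the largest and `b` the smallest real with `a • x₀ ≤ x ≤ b • x₀`; both exist because
these sets of reals are closed, the positive cone being closed. Since `x` is not a multiple of
`x₀`, `a < b`, and `y₀ = (b - a)⁻¹ • (x - a • x₀)` works: `l • x₀ ≤ y₀` would give
`(a + (b - a) l) • x₀ ≤ x`, and `l • x₀ ≤ x₀ - y₀` would give `x ≤ (b - (b - a) l) • x₀`.

Compatibility of real scalars with the order is not an axiom here. It holds for dyadic scalars
because `0 ≤ 2 • y` implies `0 ≤ y` in a lattice-ordered group, and then for all nonnegative
scalars by closedness of the positive cone.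
-/

open Filter

theorem mem_of_isClosed_of_forall_dyadic_mem {S : Set ℝ} (hS : IsClosed S)
    (hdyadic : ∀ n k : ℕ, (k : ℝ) / 2 ^ n ∈ S) {t : ℝ} (ht : 0 ≤ t) : t ∈ S := by
  have hpow : Tendsto (fun n : ℕ => (2 : ℝ) ^ n) atTop atTop :=
    tendsto_pow_atTop_atTop_of_one_lt one_lt_two
  exact hS.mem_of_tendsto ((tendsto_nat_floor_mul_div_atTop ht).comp hpow)
    (Eventually.of_forall fun n => hdyadic n _)

section LatticeOrdered

variable {X : Type*} [AddCommGroup X] [Lattice X] [IsOrderedAddMonoid X] [Module ℝ X]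

theorem dyadic_smul_nonneg {z : X} (hz : 0 ≤ z) (n k : ℕ) : 0 ≤ ((k : ℝ) / 2 ^ n) • z := by
  have hhalf : 0 ≤ ((2 : ℝ) ^ n)⁻¹ • z := by
    induction n with
    | zero => simpa using hz
    | succ n ih =>
      refine nsmul_two_semiclosed ?_
      rwa [← Nat.cast_smul_eq_nsmul ℝ, smul_smul, pow_succ', mul_inv, Nat.cast_two,
        mul_inv_cancel_left₀ (two_ne_zero (α := ℝ))]
  rw [div_eq_mul_inv, mul_smul, Nat.cast_smul_eq_nsmul]
  exact nsmul_nonneg hhalf k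

theorem posSMulMono_of_orderClosedTopology [TopologicalSpace X] [ContinuousSMul ℝ X]
    [OrderClosedTopology X] : PosSMulMono ℝ X :=
  PosSMulMono.of_smul_nonneg fun _ ht _ hz =>
    mem_of_isClosed_of_forall_dyadic_mem
      (isClosed_le continuous_const (continuous_id.smul continuous_const))
      (dyadic_smul_nonneg hz) ht

end LatticeOrdered

section OrderedModule

variable {X : Type*} [AddCommGroup X] [PartialOrder X] [IsOrderedAddMonoid X] [Module ℝ X]
  [PosSMulMono ℝ X] {x₀ x : X}

theorem bddAbove_setOf_smul_le (hx₀ : 0 ≤ x₀) (hx₀_ne : x₀ ≠ 0) (hx : x ≤ x₀) :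
    BddAbove {t : ℝ | t • x₀ ≤ x} := by
  refine ⟨1, fun t ht => not_lt.1 fun h1t => h1t.ne' ?_⟩
  refine smul_left_injective ℝ hx₀_ne (le_antisymm ?_ ?_)
  · exact ht.trans (hx.trans_eq (one_smul ℝ x₀).symm)
  · exact smul_le_smul_of_nonneg_right h1t.le hx₀

theorem bddBelow_setOf_le_smul (hx₀ : 0 ≤ x₀) (hx : 0 ≤ x) (hx_ne : x ≠ 0) :
    BddBelow {t : ℝ | x ≤ t • x₀} := by
  refine ⟨0, fun t ht => not_lt.1 fun ht0 => hx_ne (le_antisymm ?_ hx)⟩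
  exact ht.trans (smul_nonpos_of_nonpos_of_nonneg ht0.le hx₀)

theorem exists_no_multiple_below_of_isGreatest_of_isLeast {a b : ℝ} (hab : a < b)
    (ha : IsGreatest {t : ℝ | t • x₀ ≤ x} a) (hb : IsLeast {t : ℝ | x ≤ t • x₀} b) :
    ∃ y₀ : X, 0 ≤ y₀ ∧ y₀ ≤ x₀ ∧
      ∀ l : ℝ, 0 < l → ¬ (l • x₀ ≤ y₀) ∧ ¬ (l • x₀ ≤ x₀ - y₀) := by
  have hc : 0 < b - a := sub_pos.2 hab
  refine ⟨(b - a)⁻¹ • (x - a • x₀), ?_, ?_, fun l hl => ⟨fun h => ?_, fun h => ?_⟩⟩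
  · exact smul_nonneg (inv_nonneg.2 hc.le) (sub_nonneg.2 ha.1)
  · rw [inv_smul_le_iff_of_pos hc, sub_le_iff_le_add, ← add_smul, sub_add_cancel]
    exact hb.1
  · rw [le_inv_smul_iff_of_pos hc, le_sub_iff_add_le] at h
    have := ha.2 (show (a + (b - a) * l) • x₀ ≤ x by convert h using 1; module)
    linarith [mul_pos hc hl]
  · rw [le_sub_comm, inv_smul_le_iff_of_pos hc, sub_le_iff_le_add] at h
    have := hb.2 (show x ≤ (b - (b - a) * l) • x₀ by convert h using 1; module)
    linarith [mul_pos hc hl]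

end OrderedModule

theorem exists_no_multiple_below_of_not_atom_general
    (X : Type*) [NormedAddCommGroup X] [Lattice X] [HasSolidNorm X] [IsOrderedAddMonoid X] [NormedSpace ℝ X]
    (x₀ : X) (hx₀_pos : 0 ≤ x₀) (hx₀_ne : x₀ ≠ 0)
    (hnotatom : ∃ x : X, 0 ≤ x ∧ x ≤ x₀ ∧ ∀ t : ℝ, 0 ≤ t → x ≠ t • x₀) :
    ∃ y₀ : X, 0 ≤ y₀ ∧ y₀ ≤ x₀ ∧
      ∀ l : ℝ, 0 < l → ¬ (l • x₀ ≤ y₀) ∧ ¬ (l • x₀ ≤ x₀ - y₀) := by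
  obtain ⟨x, hx, hxx₀, hx_ne⟩ := hnotatom
  have := posSMulMono_of_orderClosedTopology (X := X)
  have hcont : Continuous fun t : ℝ => t • x₀ := continuous_id.smul continuous_const
  have hA : 0 ∈ {t : ℝ | t • x₀ ≤ x} := by simpa using hx
  have hB : 1 ∈ {t : ℝ | x ≤ t • x₀} := by simpa using hxx₀
  have ha := (isClosed_le hcont continuous_const).isGreatest_csSup ⟨0, hA⟩
    (bddAbove_setOf_smul_le hx₀_pos hx₀_ne hxx₀)
  have hb := (isClosed_le continuous_const hcont).isLeast_csInf ⟨1, hB⟩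
    (bddBelow_setOf_le_smul hx₀_pos hx (by simpa using hx_ne 0 le_rfl))
  refine exists_no_multiple_below_of_isGreatest_of_isLeast (not_le.1 fun hba => ?_) ha hb
  exact hx_ne _ (ha.2 hA)
    (le_antisymm (hb.1.trans (smul_le_smul_of_nonneg_right hba hx₀_pos)) ha.1)

/-- **Statement 15.** Let `X` be a Banach lattice and `x₀` a nonzero positive element.
If `x₀` is not an atom (i.e. there is `x` with `0 ≤ x ≤ x₀` which is not a nonnegative
scalar multiple of `x₀`), then there exists `y₀` with `0 ≤ y₀ ≤ x₀` such that for every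
`λ > 0` neither `λ • x₀ ≤ y₀` nor `λ • x₀ ≤ x₀ - y₀` holds. -/
theorem exists_no_multiple_below_of_not_atom
    (X : Type*) [NormedAddCommGroup X] [Lattice X] [HasSolidNorm X] [IsOrderedAddMonoid X] [NormedSpace ℝ X] [CompleteSpace X]
    (x₀ : X) (hx₀_pos : 0 ≤ x₀) (hx₀_ne : x₀ ≠ 0)
    (hnotatom : ∃ x : X, 0 ≤ x ∧ x ≤ x₀ ∧ ∀ t : ℝ, 0 ≤ t → x ≠ t • x₀) :
    ∃ y₀ : X, 0 ≤ y₀ ∧ y₀ ≤ x₀ ∧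
      ∀ l : ℝ, 0 < l → ¬ (l • x₀ ≤ y₀) ∧ ¬ (l • x₀ ≤ x₀ - y₀) :=
  exists_no_multiple_below_of_not_atom_general X x₀ hx₀_pos hx₀_ne hnotatom
end

section
/- Let X be a Banach lattice and suppose there exists a bounded positive linear projection P : X → X (P ∘ P = P, and P maps positive elements to positive elements) whose range is a closed hyperplane of X, i.e., a closed subspace of codimension one. Then X has an atom: there exists a nonzero positive element a ∈ X such that every x with 0 ≤ x ≤ a is a nonnegative scalar multiple of a. -/
/-!
Write the projection as `P x = x - ψ x • e` with `ψ e = 1`; positivity of `P` says exactly that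
`ψ x • e ≤ x` for `x ≥ 0`. Since `ψ e⁺ - ψ e⁻ = 1`, after possibly replacing `(e, ψ)` by
`(-e, -ψ)` we have `c = ψ e⁺ > 0`. Disjointness of `e⁺` and `e⁻` forces `ψ ≥ 0` on every interval
`[0, t • e⁺]`, and then `T y = y - ψ y • e⁺` maps `[0, t • e⁺]` into `[0, (1 - c) t • e⁺]`.
Hence for `x ∈ [0, e⁺]` the iterates `T^[n] x` tend to `0` (the norm is solid) while
`x - T^[n] x` stays on the closed line `ℝ ∙ e⁺`, so `x ∈ ℝ ∙ e⁺` and `e⁺` is an atom.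
-/

open Filter Topology

section LatticeOrderedGroup

variable {G : Type*} [AddCommGroup G] [Lattice G] [IsOrderedAddMonoid G]

lemma nonneg_of_two_pow_nsmul_nonneg (n : ℕ) {x : G} (h : 0 ≤ 2 ^ n • x) : 0 ≤ x := by
  induction n generalizing x with
  | zero => simpa using h
  | succ n ih => exact nsmul_two_semiclosed (ih (by rwa [pow_succ', mul_nsmul] at h))

end LatticeOrderedGroup

section ClosedCone

variable {X : Type*} [AddCommGroup X] [Lattice X] [IsOrderedAddMonoid X] [Module ℝ X]
  [TopologicalSpace X] [ContinuousSMul ℝ X] [ClosedIciTopology X]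

/-- Dyadic multiples `(m / 2 ^ n) • x` of `x ≥ 0` are nonnegative and approximate every
`c • x` with `c ≥ 0`; the positive cone is closed. -/
instance IsOrderedModule.real_of_closedIciTopology : IsOrderedModule ℝ X :=
  IsOrderedModule.of_smul_nonneg fun c hc x hx => by
    have hdyadic (n m : ℕ) : 0 ≤ ((m : ℝ) / 2 ^ n) • x := by
      refine nonneg_of_two_pow_nsmul_nonneg n ?_
      rw [← Nat.cast_smul_eq_nsmul ℝ, smul_smul, Nat.cast_pow, Nat.cast_ofNat,
        mul_div_cancel₀ _ (by positivity), Nat.cast_smul_eq_nsmul]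
      exact nsmul_nonneg hx m
    have hlim : Tendsto (fun n : ℕ => (⌊c * 2 ^ n⌋₊ : ℝ) / 2 ^ n) atTop (𝓝 c) :=
      (tendsto_nat_floor_mul_div_atTop hc).comp (tendsto_pow_atTop_atTop_of_one_lt one_lt_two)
    exact isClosed_Ici.mem_of_tendsto (hlim.smul_const x) (.of_forall fun n => hdyadic n _)

end ClosedCone

-- Mathlib's `IsAtom` needs a bottom element, which a nonzero vector lattice lacks.
def IsVectorLatticeAtom {X : Type*} [AddCommGroup X] [PartialOrder X] [Module ℝ X] (a : X) :
    Prop :=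
  0 ≤ a ∧ a ≠ 0 ∧ ∀ x : X, 0 ≤ x → x ≤ a → ∃ t : ℝ, 0 ≤ t ∧ x = t • a

lemma posPart_smul_of_nonneg {X : Type*} [AddCommGroup X] [Lattice X] [Module ℝ X]
    [IsOrderedModule ℝ X] {t : ℝ} (ht : 0 ≤ t) (a : X) : (t • a)⁺ = t • a⁺ := by
  rcases ht.eq_or_lt with rfl | ht
  · simp
  · have := (OrderIso.smulRight ht).map_sup a 0
    simp only [OrderIso.smulRight_apply, smul_zero] at this
    rw [posPart_def, posPart_def, this]

section OrderedModule

variable {X : Type*} [AddCommGroup X] [Lattice X] [IsOrderedAddMonoid X] [Module ℝ X]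
  [IsOrderedModule ℝ X]

lemma nonneg_of_smul_nonneg_of_ne_zero {t : ℝ} {a : X} (ha : 0 ≤ a) (ha₀ : a ≠ 0)
    (h : 0 ≤ t • a) : 0 ≤ t := by
  by_contra! ht
  have : t • a = 0 := le_antisymm (smul_nonpos_of_nonpos_of_nonneg ht.le ha) h
  exact ha₀ ((smul_eq_zero.1 this).resolve_left ht.ne)

lemma isVectorLatticeAtom_of_forall_mem_span {a : X} (ha : 0 ≤ a) (ha₀ : a ≠ 0)
    (h : ∀ x, 0 ≤ x → x ≤ a → x ∈ ℝ ∙ a) : IsVectorLatticeAtom a := by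
  refine ⟨ha, ha₀, fun x hx hxa => ?_⟩
  obtain ⟨t, rfl⟩ := Submodule.mem_span_singleton.1 (h x hx hxa)
  exact ⟨t, nonneg_of_smul_nonneg_of_ne_zero ha ha₀ hx, rfl⟩

lemma eq_zero_of_le_smul_of_inf_eq_zero {u v : X} (hu : 0 ≤ u) (huv : u ⊓ v = 0) (k : ℝ)
    (h : u ≤ k • v) : u = 0 := by
  set k' := max k 1
  have hk' : 0 < k' := lt_max_of_lt_right one_pos
  have hv : 0 ≤ v := huv ▸ inf_le_right
  have hle : u ≤ k' • (u ⊓ v) := by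
    have hinf := (OrderIso.smulRight hk').map_inf u v
    simp only [OrderIso.smulRight_apply] at hinf
    rw [hinf]
    refine le_inf ?_ (h.trans (smul_le_smul_of_nonneg_right (le_max_left k 1) hv))
    simpa using smul_le_smul_of_nonneg_right (le_max_right k 1) hu
  exact le_antisymm (by simpa [huv] using hle) hu

end OrderedModule

section PositiveComplement

variable {X : Type*} [AddCommGroup X] [Lattice X] [Module ℝ X] [IsOrderedModule ℝ X] {e : X}
  {ψ : X →ₗ[ℝ] ℝ}

lemma apply_smul_posPart_le (hψ : ∀ x, 0 ≤ x → ψ x • e ≤ x) {x : X} (hx : 0 ≤ x)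
    (hψx : 0 ≤ ψ x) : ψ x • e⁺ ≤ x := by
  rw [← posPart_smul_of_nonneg hψx]
  exact sup_le (hψ x hx) hx

lemma apply_nonneg_of_le_smul_posPart [IsOrderedAddMonoid X] (hψ : ∀ x, 0 ≤ x → ψ x • e ≤ x)
    (hψe : ψ e = 1) {t : ℝ} (ht : 0 ≤ t) {x : X} (hx : 0 ≤ x) (hxt : x ≤ t • e⁺) : 0 ≤ ψ x := by
  by_contra! hψx
  have hneg : (-ψ x) • e⁻ ≤ x := by
    simpa using apply_smul_posPart_le (ψ := -ψ) (e := -e) (by simpa using hψ) hx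
      (by simpa using hψx.le)
  have he : e⁻ = 0 := by
    refine eq_zero_of_le_smul_of_inf_eq_zero (negPart_nonneg e)
      (inf_comm e⁺ e⁻ ▸ posPart_inf_negPart_eq_zero e) (t / -ψ x) ?_
    rw [div_eq_inv_mul, ← smul_smul, le_inv_smul_iff_of_pos (neg_pos.2 hψx)]
    exact hneg.trans hxt
  have he' : e⁺ = e := by simpa [he] using posPart_sub_negPart e
  rw [he'] at hxt
  have hcompl := apply_smul_posPart_le hψ (sub_nonneg.2 hxt)
    (by simp only [map_sub, map_smul, hψe, smul_eq_mul]; linarith)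
  have hx_le : x ≤ ψ x • e := by
    rw [he', ← sub_nonneg] at hcompl
    rw [← sub_nonneg]
    convert hcompl using 1
    simp only [map_sub, map_smul, hψe, smul_eq_mul]
    module
  have hx₀ : x = 0 :=
    le_antisymm (hx_le.trans (smul_nonpos_of_nonpos_of_nonneg hψx.le (he' ▸ posPart_nonneg e))) hx
  simp [hx₀] at hψx

lemma sub_apply_smul_posPart_mem_Icc [IsOrderedAddMonoid X] (hψ : ∀ x, 0 ≤ x → ψ x • e ≤ x)
    (hψe : ψ e = 1) {t : ℝ} (ht : 0 ≤ t) {y : X} (hy : y ∈ Set.Icc 0 (t • e⁺)) :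
    y - ψ y • e⁺ ∈ Set.Icc 0 (((1 - ψ e⁺) * t) • e⁺) := by
  obtain ⟨hy₀, hyt⟩ := hy
  have hz₀ : 0 ≤ t • e⁺ - y := sub_nonneg.2 hyt
  have hzt : t • e⁺ - y ≤ t • e⁺ := sub_le_self _ hy₀
  have hlow := apply_smul_posPart_le hψ hy₀ (apply_nonneg_of_le_smul_posPart hψ hψe ht hy₀ hyt)
  have hupp := apply_smul_posPart_le hψ hz₀ (apply_nonneg_of_le_smul_posPart hψ hψe ht hz₀ hzt)
  refine ⟨sub_nonneg.2 hlow, ?_⟩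
  rw [← sub_nonneg] at hupp ⊢
  convert hupp using 1
  simp only [map_sub, map_smul, smul_eq_mul]
  module

end PositiveComplement

lemma HasSolidNorm.norm_le_norm_of_nonneg_of_le {X : Type*} [NormedAddCommGroup X] [Lattice X]
    [IsOrderedAddMonoid X] [HasSolidNorm X] {x y : X} (hx : 0 ≤ x) (hxy : x ≤ y) : ‖x‖ ≤ ‖y‖ :=
  norm_le_norm_of_abs_le_abs <| by rw [abs_of_nonneg hx, abs_of_nonneg (hx.trans hxy)]; exact hxy

section SolidNorm

variable {X : Type*} [NormedAddCommGroup X] [Lattice X] [IsOrderedAddMonoid X] [HasSolidNorm X]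
  [NormedSpace ℝ X] {e : X} {ψ : X →ₗ[ℝ] ℝ}

lemma isVectorLatticeAtom_posPart (hψ : ∀ x, 0 ≤ x → ψ x • e ≤ x) (hψe : ψ e = 1)
    (hc : 0 < ψ e⁺) : IsVectorLatticeAtom e⁺ := by
  set a := e⁺
  set r := 1 - ψ a
  set T : X → X := fun y => y - ψ y • a
  have ha₀ : a ≠ 0 := by rintro h; simp [h] at hc
  have hT {t : ℝ} (ht : 0 ≤ t) {y : X} (hy : y ∈ Set.Icc 0 (t • a)) :
      T y ∈ Set.Icc 0 ((r * t) • a) :=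
    sub_apply_smul_posPart_mem_Icc hψ hψe ht hy
  have hr₀ : 0 ≤ r := by
    refine nonneg_of_smul_nonneg_of_ne_zero (posPart_nonneg e) ha₀ ?_
    have hTa : T a = r • a := by simp only [T, r, sub_smul, one_smul]
    have h := (hT zero_le_one ⟨posPart_nonneg e, (one_smul ℝ a).ge⟩).1
    rwa [hTa] at h
  refine isVectorLatticeAtom_of_forall_mem_span (posPart_nonneg e) ha₀ fun x hx hxa => ?_
  have hiter (n : ℕ) : T^[n] x ∈ Set.Icc 0 (r ^ n • a) := by
    induction n with
    | zero => simpa using ⟨hx, hxa⟩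
    | succ n ih =>
      rw [Function.iterate_succ_apply', pow_succ']
      exact hT (pow_nonneg hr₀ n) ih
  have hspan (n : ℕ) : x - T^[n] x ∈ ℝ ∙ a := by
    induction n with
    | zero => simp
    | succ n ih =>
      have hstep : x - T (T^[n] x) = (x - T^[n] x) + ψ (T^[n] x) • a := by
        simp only [T]
        abel
      rw [Function.iterate_succ_apply', hstep]
      exact add_mem ih (Submodule.smul_mem _ _ (Submodule.mem_span_singleton_self a))
  have hvanish : Tendsto (fun n => T^[n] x) atTop (𝓝 0) := by
    have hr₁ : r < 1 := by linarith
    refine squeeze_zero_norm (a := fun n => r ^ n * ‖a‖) (fun n => ?_) ?_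
    · calc ‖T^[n] x‖ ≤ ‖r ^ n • a‖ :=
            HasSolidNorm.norm_le_norm_of_nonneg_of_le (hiter n).1 (hiter n).2
        _ = r ^ n * ‖a‖ := by rw [norm_smul, Real.norm_of_nonneg (pow_nonneg hr₀ n)]
    · simpa using (tendsto_pow_atTop_nhds_zero_of_lt_one hr₀ hr₁).mul_const ‖a‖
  have hlim : Tendsto (fun n => x - T^[n] x) atTop (𝓝 x) := by
    simpa using tendsto_const_nhds.sub hvanish
  exact (Submodule.closed_of_finiteDimensional _).mem_of_tendsto hlim (Eventually.of_forall hspan)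

end SolidNorm

lemma exists_isVectorLatticeAtom {X : Type*} [NormedAddCommGroup X] [Lattice X]
    [IsOrderedAddMonoid X] [HasSolidNorm X] [NormedSpace ℝ X] {e : X} {ψ : X →ₗ[ℝ] ℝ}
    (hψ : ∀ x, 0 ≤ x → ψ x • e ≤ x) (hψe : ψ e = 1) : ∃ a : X, IsVectorLatticeAtom a := by
  rcases lt_or_ge 0 (ψ e⁺) with hc | hc
  · exact ⟨_, isVectorLatticeAtom_posPart hψ hψe hc⟩
  · have hsplit : ψ e⁺ - ψ e⁻ = 1 := by rw [← map_sub, posPart_sub_negPart, hψe]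
    refine ⟨_, isVectorLatticeAtom_posPart (e := -e) (ψ := -ψ) (by simpa using hψ)
      (by simp [hψe]) ?_⟩
    simp only [posPart_neg, LinearMap.neg_apply]
    linarith

lemma LinearMap.exists_sub_apply_eq_smul_of_range_eq_ker {𝕜 V : Type*} [Field 𝕜]
    [AddCommGroup V] [Module 𝕜 V] (P : V →ₗ[𝕜] V) (hP : ∀ x, P (P x) = P x) (φ : V →ₗ[𝕜] 𝕜)
    (hφ : φ ≠ 0) (hrange : range P = ker φ) :
    ∃ (e : V) (ψ : V →ₗ[𝕜] 𝕜), ψ e = 1 ∧ ∀ x, x - P x = ψ x • e := by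
  obtain ⟨x₀, hx₀⟩ : ∃ x₀, φ x₀ ≠ 0 := by
    by_contra! h
    exact hφ (LinearMap.ext h)
  have hφP (y : V) : φ (P y) = 0 := by
    rw [← LinearMap.mem_ker, ← hrange]
    exact LinearMap.mem_range_self P y
  set e := x₀ - P x₀
  have hPe : P e = 0 := by simp [e, hP]
  have hφe : φ e = φ x₀ := by simp [e, hφP]
  refine ⟨e, (φ x₀)⁻¹ • φ, by simp [hφe, hx₀], fun x => ?_⟩
  set z := x - P x - ((φ x₀)⁻¹ • φ) x • e
  have hz : z ∈ range P := by
    rw [hrange, LinearMap.mem_ker]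
    simp only [z, map_sub, map_smul, hφP, hφe, LinearMap.smul_apply, smul_eq_mul]
    field_simp
    ring
  obtain ⟨w, hw⟩ := hz
  have hz₀ : z = 0 := by
    have hPz : P z = 0 := by simp [z, hP, hPe]
    rwa [← hw, hP, hw] at hPz
  exact sub_eq_zero.1 hz₀

theorem has_atom_of_positive_projection_onto_hyperplane_general
    (X : Type*) [NormedAddCommGroup X] [Lattice X] [IsOrderedAddMonoid X] [HasSolidNorm X] [NormedSpace ℝ X]
    (P : X →L[ℝ] X) (hproj : P.comp P = P)
    (hpos : ∀ x : X, 0 ≤ x → 0 ≤ P x)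
    (hhyperplane : ∃ φ : X →L[ℝ] ℝ, φ ≠ 0 ∧ Set.range P = {x : X | φ x = 0}) :
    ∃ a : X, 0 ≤ a ∧ a ≠ 0 ∧ ∀ x : X, 0 ≤ x → x ≤ a → ∃ t : ℝ, 0 ≤ t ∧ x = t • a := by
  obtain ⟨φ, hφ, hrange⟩ := hhyperplane
  obtain ⟨e, ψ, hψe, hdecomp⟩ := LinearMap.exists_sub_apply_eq_smul_of_range_eq_ker
    (P : X →ₗ[ℝ] X) (fun x => congr($hproj x)) (φ : X →ₗ[ℝ] ℝ)
    (by simpa [← ContinuousLinearMap.coe_inj] using hφ) (SetLike.coe_injective hrange)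
  exact exists_isVectorLatticeAtom (fun x hx => hdecomp x ▸ sub_le_self x (hpos x hx)) hψe

/-- **Statement 16.** Let `X` be a Banach lattice admitting a bounded positive linear
projection `P : X → X` whose range is a closed hyperplane of `X` (the kernel of a
nonzero bounded linear functional). Then `X` has an atom: a nonzero positive element
`a` such that every `x` with `0 ≤ x ≤ a` is a nonnegative scalar multiple of `a`. -/
theorem has_atom_of_positive_projection_onto_hyperplane
    (X : Type*) [NormedAddCommGroup X] [Lattice X] [IsOrderedAddMonoid X] [HasSolidNorm X] [NormedSpace ℝ X] [CompleteSpace X]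
    (P : X →L[ℝ] X) (hproj : P.comp P = P)
    (hpos : ∀ x : X, 0 ≤ x → 0 ≤ P x)
    (hhyperplane : ∃ φ : X →L[ℝ] ℝ, φ ≠ 0 ∧ Set.range P = {x : X | φ x = 0}) :
    ∃ a : X, 0 ≤ a ∧ a ≠ 0 ∧ ∀ x : X, 0 ≤ x → x ≤ a → ∃ t : ℝ, 0 ≤ t ∧ x = t • a :=
  has_atom_of_positive_projection_onto_hyperplane_general X P hproj hpos hhyperplane
end
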